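/- In the augmented simplicial chain complex of the n-simplex, the atom of every non-degenerate simplex is unital: for a strictly increasing tuple x = (j₀ < j₁ < ⋯ < j_p) with 0 ≤ j₀, j_p ≤ n, the iterated negative boundary part reaches the first vertex and the iterated positive boundary part reaches the last vertex, i.e., ⟨x⟩⁰₀ = (j₀) and ⟨x⟩¹₀ = (j_p); in particular e(⟨x⟩⁰₀) = 1 = e(⟨x⟩¹₀). -/

import Mathlib

/-!
Atom tables are natural under vertex embeddings `Δᵖ → Δⁿ`, so it suffices to treat the top
simplex of `Δⁿ`. The top simplex of `Δⁿ⁺¹` is the cone `C` with apex `n + 1`, and also the cone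
`C₀` with apex `0`, over the top simplex of `Δⁿ`. With `I`, `I₀` the two face inclusions
`Δⁿ → Δⁿ⁺¹`, one has `d (C z) = C (d z) ± I z` and `d (C₀ z) = I₀ z - C₀ (d z)`; the two
summands have disjoint supports, so positive and negative parts are taken summand by summand.
Downward induction on the degree gives `⟨Δⁿ⁺¹⟩¹_{k+1} = C ⟨Δⁿ⟩¹_k + [k even] I ⟨Δⁿ⟩¹_{k+1}` and
`⟨Δⁿ⁺¹⟩⁰_{k+1} = C₀ ⟨Δⁿ⟩¹_k`, the remaining inclusion terms being images of
`d ⟨Δⁿ⟩¹_{k+1} - ⟨Δⁿ⟩¹_k ≤ 0`. In degree `0` only the last, respectively the first, vertex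
survives.
-/

/-- The graded basis of the augmented simplicial chain complex of the
`n`-simplex: in degree `p`, the strictly increasing `(p+1)`-tuples of
elements of `{0, …, n}`, i.e. the non-degenerate `p`-simplices of `Δⁿ`. -/
def SimplexBasis (n p : ℕ) : Type :=
  {f : Fin (p + 1) → Fin (n + 1) // StrictMono f}

/-- The `k`-th face of a non-degenerate simplex, deleting the `k`-th vertex. -/
def simplexFace (n p : ℕ) (s : SimplexBasis n (p + 1)) (k : Fin (p + 2)) :
    SimplexBasis n p :=
  ⟨s.1 ∘ k.succAbove, s.2.comp (Fin.strictMono_succAbove k)⟩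

/-- The simplicial differential
`d (j₀, …, j_{p+1}) = Σ_k (−1)^k (j₀, …, ĵ_k, …, j_{p+1})`, extended
linearly. -/
noncomputable def simplexD (n : ℕ) :
    ∀ p, (SimplexBasis n (p + 1) →₀ ℤ) → (SimplexBasis n p →₀ ℤ) :=
  fun p z => z.sum fun s c =>
    c • ∑ k : Fin (p + 2), ((-1 : ℤ) ^ (k : ℕ)) • Finsupp.single (simplexFace n p s k) 1

/-- The negative part `z₋` of an element of the free abelian group `α →₀ ℤ`. -/
noncomputable def fnegPart {α : Type*} (z : α →₀ ℤ) : α →₀ ℤ :=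
  z.mapRange (fun t => max (-t) 0) (by simp)

/-- The positive part `z₊`. -/
noncomputable def fposPart {α : Type*} (z : α →₀ ℤ) : α →₀ ℤ :=
  z.mapRange (fun t => max t 0) (by simp)

/-- The lower source row `⟨x⟩⁰_k` of the atom table of `x ∈ K_i`:
`⟨x⟩⁰_i = x`, `⟨x⟩⁰_{k-1} = d(⟨x⟩⁰_k)₋`. -/
noncomputable def atomNeg {B : ℕ → Type*}
    (d : ∀ n, (B (n + 1) →₀ ℤ) → (B n →₀ ℤ)) :
    (i : ℕ) → (B i →₀ ℤ) → (k : ℕ) → (B k →₀ ℤ)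
  | 0, x, k => if h : k = 0 then by subst h; exact x else 0
  | i + 1, x, k =>
      if h : k = i + 1 then by subst h; exact x
      else atomNeg d i (fnegPart (d i x)) k

/-- The upper target row `⟨x⟩¹_k` of the atom table of `x ∈ K_i`:
`⟨x⟩¹_i = x`, `⟨x⟩¹_{k-1} = d(⟨x⟩¹_k)₊`. -/
noncomputable def atomPos {B : ℕ → Type*}
    (d : ∀ n, (B (n + 1) →₀ ℤ) → (B n →₀ ℤ)) :
    (i : ℕ) → (B i →₀ ℤ) → (k : ℕ) → (B k →₀ ℤ)
  | 0, x, k => if h : k = 0 then by subst h; exact x else 0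
  | i + 1, x, k =>
      if h : k = i + 1 then by subst h; exact x
      else atomPos d i (fposPart (d i x)) k

section PosPart

variable {α β γ : Type*}

lemma fposPart_eq_posPart (z : α →₀ ℤ) : fposPart z = z⁺ := by
  ext a; simp [fposPart, posPart_def]

lemma fnegPart_eq_posPart_neg (z : α →₀ ℤ) : fnegPart z = (-z)⁺ := by
  ext a; simp [fnegPart, posPart_def]

namespace Finsupp

lemma posPart_apply (z : α →₀ ℤ) (a : α) : z⁺ a = (z a)⁺ := rfl

lemma mapDomain_neg {f : α → β} (z : α →₀ ℤ) : mapDomain f (-z) = -mapDomain f z :=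
  map_neg (mapDomain.addMonoidHom f) z

lemma coe_support_mapDomain_subset_range (f : α → β) (z : α →₀ ℤ) :
    ↑(mapDomain f z).support ⊆ Set.range f := by
  classical
  intro b hb
  obtain ⟨a, -, rfl⟩ := Finset.mem_image.mp (mapDomain_support hb)
  exact Set.mem_range_self a

lemma disjoint_support_mapDomain {g : β → γ} {s : Set γ} (hs : Disjoint s (Set.range g))
    {u : γ →₀ ℤ} (hu : ↑u.support ⊆ s) (w : β →₀ ℤ) :
    Disjoint u.support (mapDomain g w).support :=
  Finset.disjoint_coe.mp (hs.mono hu (coe_support_mapDomain_subset_range g w))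

lemma disjoint_support_single_mapDomain {a : γ} {g : β → γ} (ha : a ∉ Set.range g) (c : ℤ)
    (w : β →₀ ℤ) : Disjoint (single a c).support (mapDomain g w).support :=
  disjoint_support_mapDomain (Set.disjoint_singleton_left.2 ha)
    (Finset.coe_subset_singleton.2 support_single_subset) w

lemma posPart_add_of_disjoint {u w : α →₀ ℤ} (h : Disjoint u.support w.support) :
    (u + w)⁺ = u⁺ + w⁺ := by
  ext a
  by_cases hu : a ∈ u.support
  · simp [posPart_apply, notMem_support_iff.mp (Finset.disjoint_left.mp h hu)]
  · simp [posPart_apply, notMem_support_iff.mp hu]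

lemma posPart_mapDomain {f : α → β} (hf : Function.Injective f) (z : α →₀ ℤ) :
    (mapDomain f z)⁺ = mapDomain f z⁺ := by
  ext b
  by_cases hb : b ∈ Set.range f
  · obtain ⟨a, rfl⟩ := hb
    simp only [posPart_apply, mapDomain_apply hf]
  · simp [posPart_apply, mapDomain_of_notMem_range _ _ hb]

lemma posPart_mapDomain_add_mapDomain {f : α → γ} {g : β → γ} (hf : Function.Injective f)
    (hg : Function.Injective g) (hfg : Disjoint (Set.range f) (Set.range g)) (u : α →₀ ℤ)
    (w : β →₀ ℤ) : (mapDomain f u + mapDomain g w)⁺ = mapDomain f u⁺ + mapDomain g w⁺ := by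
  rw [posPart_add_of_disjoint
      (disjoint_support_mapDomain hfg (coe_support_mapDomain_subset_range f u) w),
    posPart_mapDomain hf, posPart_mapDomain hg]

lemma negPart_single_sub_single {a b : α} (h : a ≠ b) :
    (single a (1 : ℤ) - single b 1)⁻ = single b 1 := by
  ext c
  rcases eq_or_ne c b with rfl | hb
  · simp [negPart_def, h]
  · rcases eq_or_ne c a with rfl | ha <;> simp [negPart_def, *]

end Finsupp

end PosPart

open Finsupp Function

section AtomTable

variable {B : ℕ → Type*} (d : ∀ k, (B (k + 1) →₀ ℤ) → (B k →₀ ℤ))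

lemma atomPos_self (i : ℕ) (x : B i →₀ ℤ) : atomPos d i x i = x := by
  cases i <;> simp [atomPos]

lemma atomPos_eq_zero_of_lt {i k : ℕ} (h : i < k) (x : B i →₀ ℤ) : atomPos d i x k = 0 := by
  induction i with
  | zero => rw [atomPos, dif_neg h.ne']
  | succ i ih => rw [atomPos, dif_neg h.ne', ih (by omega)]

lemma atomPos_of_lt {i k : ℕ} (h : k < i) (x : B i →₀ ℤ) :
    atomPos d i x k = (d k (atomPos d i x (k + 1)))⁺ := by
  induction i with
  | zero => omega
  | succ i ih =>
    rw [atomPos, dif_neg h.ne, fposPart_eq_posPart]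
    rcases (Nat.lt_succ_iff.mp h).lt_or_eq with h' | rfl
    · rw [ih h', atomPos, dif_neg (by omega), fposPart_eq_posPart]
    · rw [atomPos_self, atomPos, dif_pos rfl]

lemma atomNeg_eq_atomPos_neg (i : ℕ) (x : B i →₀ ℤ) (k : ℕ) :
    atomNeg d i x k = atomPos (fun k z => -d k z) i x k := by
  induction i with
  | zero => rfl
  | succ i ih =>
    rw [atomNeg, atomPos, ih, fnegPart_eq_posPart_neg, fposPart_eq_posPart]

lemma atomNeg_self (i : ℕ) (x : B i →₀ ℤ) : atomNeg d i x i = x := by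
  rw [atomNeg_eq_atomPos_neg, atomPos_self]

lemma atomNeg_of_lt {i k : ℕ} (h : k < i) (x : B i →₀ ℤ) :
    atomNeg d i x k = (d k (atomNeg d i x (k + 1)))⁻ := by
  rw [atomNeg_eq_atomPos_neg, atomPos_of_lt _ h, ← atomNeg_eq_atomPos_neg, posPart_neg]

variable {d}

lemma atomPos_nonneg {i : ℕ} {x : B i →₀ ℤ} (hx : 0 ≤ x) (k : ℕ) : 0 ≤ atomPos d i x k := by
  rcases lt_trichotomy k i with h | rfl | h
  · rw [atomPos_of_lt d h]; exact posPart_nonneg _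
  · rwa [atomPos_self]
  · rw [atomPos_eq_zero_of_lt d h]

lemma apply_atomPos_succ_le {i k : ℕ} {x : B i →₀ ℤ} (hx : 0 ≤ x) (hd : d k 0 = 0) :
    d k (atomPos d i x (k + 1)) ≤ atomPos d i x k := by
  rcases lt_or_ge k i with h | h
  · rw [atomPos_of_lt d h]; exact le_posPart _
  · rw [atomPos_eq_zero_of_lt d (Nat.lt_succ_of_le h), hd]; exact atomPos_nonneg hx k

lemma atomPos_mapDomain {B' : ℕ → Type*} {d' : ∀ k, (B' (k + 1) →₀ ℤ) → (B' k →₀ ℤ)}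
    {f : ∀ k, B k → B' k} (hf : ∀ k, Injective (f k))
    (hd : ∀ k z, d' k (mapDomain (f (k + 1)) z) = mapDomain (f k) (d k z))
    (i : ℕ) (x : B i →₀ ℤ) (k : ℕ) :
    atomPos d' i (mapDomain (f i) x) k = mapDomain (f k) (atomPos d i x k) := by
  rcases lt_or_ge i k with h | h
  · rw [atomPos_eq_zero_of_lt d' h, atomPos_eq_zero_of_lt d h, mapDomain_zero]
  induction h using Nat.decreasingInduction with
  | self => rw [atomPos_self, atomPos_self]
  | of_succ k h ih =>
    rw [atomPos_of_lt d' h, atomPos_of_lt d h, ih, hd, posPart_mapDomain (hf k)]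

lemma atomNeg_mapDomain {B' : ℕ → Type*} {d' : ∀ k, (B' (k + 1) →₀ ℤ) → (B' k →₀ ℤ)}
    {f : ∀ k, B k → B' k} (hf : ∀ k, Injective (f k))
    (hd : ∀ k z, d' k (mapDomain (f (k + 1)) z) = mapDomain (f k) (d k z))
    (i : ℕ) (x : B i →₀ ℤ) (k : ℕ) :
    atomNeg d' i (mapDomain (f i) x) k = mapDomain (f k) (atomNeg d i x k) := by
  simp only [atomNeg_eq_atomPos_neg]
  exact atomPos_mapDomain hf (fun k z => by rw [hd, mapDomain_neg]) i x k

end AtomTable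

namespace SimplexBasis

variable {m n k : ℕ}

def vertex (v : Fin (n + 1)) : SimplexBasis n 0 :=
  ⟨fun _ => v, @Subsingleton.strictMono _ _ _ _ Fin.subsingleton_one _⟩

def top (n : ℕ) : SimplexBasis n n :=
  ⟨id, strictMono_id⟩

lemma top_zero : top 0 = vertex 0 :=
  Subtype.ext (funext Fin.fin_one_eq_zero)

def map (g : Fin (m + 1) ↪o Fin (n + 1)) (s : SimplexBasis m k) : SimplexBasis n k :=
  ⟨g ∘ s.1, g.strictMono.comp s.2⟩

lemma map_injective (g : Fin (m + 1) ↪o Fin (n + 1)) : Injective (map (k := k) g) :=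
  fun _ _ h => Subtype.ext (funext fun i => g.injective (congrFun (congrArg Subtype.val h) i))

lemma map_simplexFace (g : Fin (m + 1) ↪o Fin (n + 1)) (s : SimplexBasis m (k + 1))
    (j : Fin (k + 2)) : map g (simplexFace m k s j) = simplexFace n k (map g s) j :=
  rfl

def toOrderEmbedding (s : SimplexBasis n k) : Fin (k + 1) ↪o Fin (n + 1) :=
  OrderEmbedding.ofStrictMono s.1 s.2

lemma map_toOrderEmbedding_top (s : SimplexBasis n k) : map s.toOrderEmbedding (top k) = s :=
  rfl

def coneLast (s : SimplexBasis n k) : SimplexBasis (n + 1) (k + 1) :=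
  ⟨Fin.snoc (Fin.castSucc ∘ s.1) (Fin.last (n + 1)), by
    simpa only [Fin.insertNth_last'] using
      Fin.strictMono_insertNth_last (Fin.strictMono_castSucc.comp s.2) _
        (Fin.castSucc_lt_last _)⟩

def coneZero (s : SimplexBasis n k) : SimplexBasis (n + 1) (k + 1) :=
  ⟨Fin.cons 0 (Fin.succ ∘ s.1),
    Fin.strictMono_cons.2 ⟨fun _ => Fin.succ_pos _, Fin.strictMono_succ.comp s.2⟩⟩

lemma coneLast_injective : Injective (coneLast (n := n) (k := k)) := fun s t h =>
  Subtype.ext (funext fun i => Fin.castSucc_injective _ (by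
    simpa [coneLast] using congrFun (congrArg Subtype.val h) i.castSucc))

lemma coneZero_injective : Injective (coneZero (n := n) (k := k)) := fun s t h =>
  Subtype.ext (funext fun i => Fin.succ_injective _ (by
    simpa [coneZero] using congrFun (congrArg Subtype.val h) i.succ))

lemma disjoint_range_coneLast_map_castSucc :
    Disjoint (Set.range (coneLast (n := n) (k := k)))
      (Set.range (map (k := k + 1) Fin.castSuccOrderEmb)) := by
  refine Set.disjoint_range_iff.2 fun s t h => (Fin.castSucc_lt_last (t.1 (Fin.last _))).ne ?_
  simpa [coneLast, map] using (congrFun (congrArg Subtype.val h) (Fin.last (k + 1))).symm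

lemma disjoint_range_coneZero_map_succ :
    Disjoint (Set.range (coneZero (n := n) (k := k)))
      (Set.range (map (k := k + 1) (Fin.succOrderEmb (n + 1)))) := by
  refine Set.disjoint_range_iff.2 fun s t h => Fin.succ_ne_zero (t.1 0) ?_
  simpa [coneZero, map] using (congrFun (congrArg Subtype.val h) 0).symm

lemma coneLast_top (n : ℕ) : coneLast (top n) = top (n + 1) := by
  refine Subtype.ext (funext fun i => ?_)
  induction i using Fin.lastCases <;> simp [coneLast, top]

lemma coneZero_top (n : ℕ) : coneZero (top n) = top (n + 1) := by
  refine Subtype.ext (funext fun i => ?_)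
  induction i using Fin.cases <;> simp [coneZero, top]

lemma simplexFace_coneLast_castSucc (s : SimplexBasis n (k + 1)) (j : Fin (k + 2)) :
    simplexFace (n + 1) (k + 1) (coneLast s) j.castSucc = coneLast (simplexFace n k s j) := by
  refine Subtype.ext (funext fun i => ?_)
  induction i using Fin.lastCases with
  | last => simp [simplexFace, coneLast, (Fin.castSucc_lt_last j).ne]
  | cast i => simp [simplexFace, coneLast, Fin.castSucc_succAbove_castSucc]

lemma simplexFace_coneLast_last (s : SimplexBasis n k) :
    simplexFace (n + 1) k (coneLast s) (Fin.last (k + 1)) =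
      map Fin.castSuccOrderEmb s := by
  refine Subtype.ext (funext fun i => ?_)
  simp [simplexFace, coneLast, map]

lemma simplexFace_coneZero_zero (s : SimplexBasis n k) :
    simplexFace (n + 1) k (coneZero s) 0 = map (Fin.succOrderEmb (n + 1)) s := by
  refine Subtype.ext (funext fun i => ?_)
  simp [simplexFace, coneZero, map]

lemma simplexFace_coneZero_succ (s : SimplexBasis n (k + 1)) (j : Fin (k + 2)) :
    simplexFace (n + 1) (k + 1) (coneZero s) j.succ = coneZero (simplexFace n k s j) := by
  refine Subtype.ext (funext fun i => ?_)
  induction i using Fin.cases <;>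
    simp only [simplexFace, coneZero, comp_apply, Fin.succ_succAbove_zero,
      Fin.succ_succAbove_succ, Fin.cons_zero, Fin.cons_succ]

end SimplexBasis

section Differential

open SimplexBasis

variable {m n k : ℕ}

lemma simplexD_eq_linearCombination (n k : ℕ) :
    simplexD n k = linearCombination ℤ fun s =>
      ∑ j : Fin (k + 2), ((-1 : ℤ) ^ (j : ℕ)) • single (simplexFace n k s j) 1 := by
  ext z : 1
  rw [linearCombination_apply]
  rfl

lemma simplexD_zero : simplexD n k 0 = 0 := by
  rw [simplexD_eq_linearCombination, map_zero]

lemma simplexD_add (z w : SimplexBasis n (k + 1) →₀ ℤ) :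
    simplexD n k (z + w) = simplexD n k z + simplexD n k w := by
  simp only [simplexD_eq_linearCombination, map_add]

lemma simplexD_single (s : SimplexBasis n (k + 1)) (c : ℤ) :
    simplexD n k (single s c) =
      c • ∑ j : Fin (k + 2), ((-1 : ℤ) ^ (j : ℕ)) • single (simplexFace n k s j) 1 := by
  rw [simplexD_eq_linearCombination, linearCombination_single]

lemma simplexD_mapDomain_map (g : Fin (m + 1) ↪o Fin (n + 1))
    (z : SimplexBasis m (k + 1) →₀ ℤ) :
    simplexD n k (mapDomain (map g) z) = mapDomain (map g) (simplexD m k z) := by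
  induction z using Finsupp.induction_linear with
  | zero => simp only [mapDomain_zero, simplexD_zero]
  | add z w hz hw => rw [mapDomain_add, simplexD_add, simplexD_add, hz, hw, mapDomain_add]
  | single s c =>
    simp only [mapDomain_single, simplexD_single, mapDomain_smul, mapDomain_finsetSum,
      map_simplexFace]

lemma atomPos_mapDomain_map (g : Fin (m + 1) ↪o Fin (n + 1)) (i : ℕ)
    (x : SimplexBasis m i →₀ ℤ) (k : ℕ) :
    atomPos (simplexD n) i (mapDomain (map g) x) k =
      mapDomain (map g) (atomPos (simplexD m) i x k) :=
  atomPos_mapDomain (fun k => map_injective (k := k) g) (fun _ => simplexD_mapDomain_map g) i x k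

lemma atomNeg_mapDomain_map (g : Fin (m + 1) ↪o Fin (n + 1)) (i : ℕ)
    (x : SimplexBasis m i →₀ ℤ) (k : ℕ) :
    atomNeg (simplexD n) i (mapDomain (map g) x) k =
      mapDomain (map g) (atomNeg (simplexD m) i x k) :=
  atomNeg_mapDomain (fun k => map_injective (k := k) g) (fun _ => simplexD_mapDomain_map g) i x k

lemma simplexD_mapDomain_coneLast (z : SimplexBasis n (k + 1) →₀ ℤ) :
    simplexD (n + 1) (k + 1) (mapDomain coneLast z) =
      mapDomain coneLast (simplexD n k z) +
        (-1 : ℤ) ^ k • mapDomain (map Fin.castSuccOrderEmb) z := by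
  induction z using Finsupp.induction_linear with
  | zero => simp only [mapDomain_zero, simplexD_zero, smul_zero, add_zero]
  | add z w hz hw =>
    simp only [mapDomain_add, simplexD_add, hz, hw, smul_add]
    abel
  | single s c =>
    simp only [mapDomain_single, simplexD_single, mapDomain_smul, mapDomain_finsetSum,
      Fin.sum_univ_castSucc (n := k + 2), simplexFace_coneLast_castSucc,
      simplexFace_coneLast_last, Fin.val_castSucc, Fin.val_last]
    rw [smul_add, pow_add, neg_one_sq, mul_one, smul_comm, smul_single_one]

lemma simplexD_mapDomain_coneZero (z : SimplexBasis n (k + 1) →₀ ℤ) :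
    simplexD (n + 1) (k + 1) (mapDomain coneZero z) =
      mapDomain (map (Fin.succOrderEmb (n + 1))) z - mapDomain coneZero (simplexD n k z) := by
  induction z using Finsupp.induction_linear with
  | zero => simp only [mapDomain_zero, simplexD_zero, sub_zero]
  | add z w hz hw =>
    simp only [mapDomain_add, simplexD_add, hz, hw]
    abel
  | single s c =>
    simp only [mapDomain_single, simplexD_single, mapDomain_smul, mapDomain_finsetSum,
      Fin.sum_univ_succ (n := k + 2), simplexFace_coneZero_zero, simplexFace_coneZero_succ,
      Fin.val_zero, Fin.val_succ, pow_zero, one_smul, pow_succ, mul_neg_one, neg_smul,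
      Finset.sum_neg_distrib]
    rw [smul_add, smul_single_one, smul_neg, sub_eq_add_neg]

lemma simplexD_single_edge (s : SimplexBasis n 1) :
    simplexD n 0 (single s 1) = single (vertex (s.1 1)) 1 - single (vertex (s.1 0)) 1 := by
  have face_zero : simplexFace n 0 s 0 = vertex (s.1 1) :=
    Subtype.ext (funext fun i => by fin_cases i; rfl)
  have face_one : simplexFace n 0 s 1 = vertex (s.1 0) :=
    Subtype.ext (funext fun i => by fin_cases i; rfl)
  rw [simplexD_single, Fin.sum_univ_two, face_zero, face_one, one_smul, Fin.val_zero,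
    Fin.val_one, pow_zero, pow_one, one_smul, neg_one_smul, ← sub_eq_add_neg]

lemma simplexD_single_coneLast_vertex (v : Fin (n + 1)) :
    simplexD (n + 1) 0 (single (coneLast (vertex v)) 1) =
      single (vertex (Fin.last (n + 1))) 1 - single (map Fin.castSuccOrderEmb (vertex v)) 1 :=
  simplexD_single_edge _

lemma simplexD_single_coneZero_vertex (v : Fin (n + 1)) :
    simplexD (n + 1) 0 (single (coneZero (vertex v)) 1) =
      single (map (Fin.succOrderEmb (n + 1)) (vertex v)) 1 - single (vertex 0) 1 :=
  simplexD_single_edge _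

end Differential

section TopSimplex

open SimplexBasis

noncomputable def topAtomPos (n k : ℕ) : SimplexBasis n k →₀ ℤ :=
  atomPos (simplexD n) n (single (top n) 1) k

noncomputable def topAtomNeg (n k : ℕ) : SimplexBasis n k →₀ ℤ :=
  atomNeg (simplexD n) n (single (top n) 1) k

variable {n : ℕ}

lemma topAtomPos_of_lt {k : ℕ} (h : k < n) :
    topAtomPos n k = (simplexD n k (topAtomPos n (k + 1)))⁺ :=
  atomPos_of_lt _ h _

lemma topAtomNeg_of_lt {k : ℕ} (h : k < n) :
    topAtomNeg n k = (simplexD n k (topAtomNeg n (k + 1)))⁻ :=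
  atomNeg_of_lt _ h _

lemma topAtomPos_nonneg (n k : ℕ) : 0 ≤ topAtomPos n k :=
  atomPos_nonneg (single_nonneg.2 zero_le_one) k

lemma posPart_simplexD_topAtomPos_sub (n k : ℕ) :
    (simplexD n k (topAtomPos n (k + 1)) - topAtomPos n k)⁺ = 0 :=
  posPart_eq_zero.2 <| sub_nonpos.2 <|
    apply_atomPos_succ_le (single_nonneg.2 zero_le_one) simplexD_zero

theorem topAtomPos_succ_succ {k : ℕ} (hk : k ≤ n) :
    topAtomPos (n + 1) (k + 1) = mapDomain coneLast (topAtomPos n k) +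
      if Even k then mapDomain (map Fin.castSuccOrderEmb) (topAtomPos n (k + 1)) else 0 := by
  induction hk using Nat.decreasingInduction with
  | self =>
    rw [topAtomPos, atomPos_self, topAtomPos, atomPos_self, topAtomPos,
      atomPos_eq_zero_of_lt _ n.lt_succ_self, mapDomain_zero, ite_self, add_zero,
      mapDomain_single, coneLast_top]
  | of_succ k hk ih =>
    have hpos := posPart_mapDomain_add_mapDomain (coneLast_injective (n := n) (k := k))
      (map_injective _) disjoint_range_coneLast_map_castSucc
    rw [topAtomPos_of_lt (by omega), ih]
    rcases Nat.even_or_odd k with hk' | hk'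
    · rw [if_neg (Nat.not_even_iff_odd.2 hk'.add_one), if_pos hk', add_zero,
        simplexD_mapDomain_coneLast, hk'.neg_one_pow, one_smul, hpos, ← topAtomPos_of_lt hk,
        posPart_of_nonneg (topAtomPos_nonneg n (k + 1))]
    · have hd : simplexD (n + 1) (k + 1) (mapDomain coneLast (topAtomPos n (k + 1)) +
            mapDomain (map Fin.castSuccOrderEmb) (topAtomPos n (k + 2))) =
          mapDomain coneLast (simplexD n k (topAtomPos n (k + 1))) +
            mapDomain (map Fin.castSuccOrderEmb)
              (simplexD n (k + 1) (topAtomPos n (k + 2)) - topAtomPos n (k + 1)) := by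
        rw [simplexD_add, simplexD_mapDomain_coneLast, simplexD_mapDomain_map, hk'.neg_one_pow,
          neg_one_smul, mapDomain_sub]
        abel
      rw [if_pos hk'.add_one, if_neg (Nat.not_even_iff_odd.2 hk'), hd, hpos,
        ← topAtomPos_of_lt hk, posPart_simplexD_topAtomPos_sub, mapDomain_zero]

theorem topAtomPos_zero (n : ℕ) : topAtomPos n 0 = single (vertex (Fin.last n)) 1 := by
  induction n with
  | zero => rw [topAtomPos, atomPos_self, top_zero]; rfl
  | succ n ih =>
    have hd : simplexD (n + 1) 0 (topAtomPos (n + 1) 1) =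
        single (vertex (Fin.last (n + 1))) 1 + mapDomain (map Fin.castSuccOrderEmb)
          (simplexD n 0 (topAtomPos n 1) - topAtomPos n 0) := by
      rw [topAtomPos_succ_succ n.zero_le, if_pos Even.zero, simplexD_add, ih, mapDomain_single,
        simplexD_single_coneLast_vertex, simplexD_mapDomain_map, mapDomain_sub, mapDomain_single]
      abel
    have hlast : vertex (Fin.last (n + 1)) ∉ Set.range (map (k := 0) Fin.castSuccOrderEmb) :=
      fun ⟨t, ht⟩ => (Fin.castSucc_lt_last _).ne (congrFun (congrArg Subtype.val ht) 0)
    rw [topAtomPos_of_lt n.succ_pos, hd,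
      posPart_add_of_disjoint (disjoint_support_single_mapDomain hlast _ _),
      posPart_of_nonneg (single_nonneg.2 zero_le_one), posPart_mapDomain (map_injective _),
      posPart_simplexD_topAtomPos_sub, mapDomain_zero, add_zero]

theorem topAtomNeg_succ_succ {k : ℕ} (hk : k ≤ n) :
    topAtomNeg (n + 1) (k + 1) = mapDomain coneZero (topAtomPos n k) := by
  induction hk using Nat.decreasingInduction with
  | self =>
    rw [topAtomNeg, atomNeg_self, topAtomPos, atomPos_self, mapDomain_single, coneZero_top]
  | of_succ k hk ih =>
    rw [topAtomNeg_of_lt (by omega), ih, simplexD_mapDomain_coneZero, ← posPart_neg, neg_sub,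
      sub_eq_add_neg, ← mapDomain_neg,
      posPart_mapDomain_add_mapDomain coneZero_injective (map_injective _)
        disjoint_range_coneZero_map_succ,
      ← topAtomPos_of_lt hk, posPart_neg, negPart_eq_zero.2 (topAtomPos_nonneg n (k + 1)),
      mapDomain_zero, add_zero]

theorem topAtomNeg_zero (n : ℕ) : topAtomNeg n 0 = single (vertex 0) 1 := by
  cases n with
  | zero => rw [topAtomNeg, atomNeg_self, top_zero]
  | succ n =>
    rw [topAtomNeg_of_lt n.succ_pos, topAtomNeg_succ_succ n.zero_le, topAtomPos_zero,
      mapDomain_single, simplexD_single_coneZero_vertex]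
    exact negPart_single_sub_single fun h => Fin.succ_ne_zero _ (congrArg (·.1 0) h)

end TopSimplex

section Reduction

open SimplexBasis

variable {n p : ℕ}

theorem atomPos_single_zero (x : SimplexBasis n p) :
    atomPos (simplexD n) p (single x 1) 0 = single (vertex (x.1 (Fin.last p))) 1 := by
  conv_lhs => rw [← map_toOrderEmbedding_top x, ← mapDomain_single]
  rw [atomPos_mapDomain_map, ← topAtomPos, topAtomPos_zero, mapDomain_single]
  rfl

theorem atomNeg_single_zero (x : SimplexBasis n p) :
    atomNeg (simplexD n) p (single x 1) 0 = single (vertex (x.1 0)) 1 := by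
  conv_lhs => rw [← map_toOrderEmbedding_top x, ← mapDomain_single]
  rw [atomNeg_mapDomain_map, ← topAtomNeg, topAtomNeg_zero, mapDomain_single]
  rfl

end Reduction

/-- In the augmented simplicial chain complex of `Δⁿ`, the atom of every
non-degenerate simplex `x = (j₀ < ⋯ < j_p)` is unital: `⟨x⟩⁰₀` is (the
generator at) the first vertex `j₀`, `⟨x⟩¹₀` is the last vertex `j_p`, and in
particular the augmentation takes the value `1` on both. -/
theorem simplex_atom_unital (n p : ℕ) (x : SimplexBasis n p) :
    atomNeg (simplexD n) p (Finsupp.single x 1) 0 =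
        Finsupp.single
          (⟨fun _ => x.1 0, @Subsingleton.strictMono _ _ _ _ Fin.subsingleton_one _⟩ : SimplexBasis n 0) 1 ∧
      atomPos (simplexD n) p (Finsupp.single x 1) 0 =
        Finsupp.single
          (⟨fun _ => x.1 (Fin.last p), @Subsingleton.strictMono _ _ _ _ Fin.subsingleton_one _⟩ : SimplexBasis n 0) 1 ∧
      (atomNeg (simplexD n) p (Finsupp.single x 1) 0).sum (fun _ c => c) = 1 ∧
      (atomPos (simplexD n) p (Finsupp.single x 1) 0).sum (fun _ c => c) = 1 := by
  refine ⟨atomNeg_single_zero x, atomPos_single_zero x, ?_, ?_⟩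
  · rw [atomNeg_single_zero, sum_single_index rfl]
  · rw [atomPos_single_zero, sum_single_index rfl]
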